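/- (Localized immature-channel bound.) Let X ∈ ℝ^{n×d}, W_Q, W_K ∈ ℝ^{d×d_k}, E ∈ ℝ^{n×n}, let P ∈ ℝ^{d×d} be an orthogonal projector, set X_P = X P, G_Q = Xᵀ E X W_K / √d_k, G_K = Xᵀ Eᵀ X W_Q / √d_k, and for step sizes η_Q, η_K ≥ 0 define W_Q⁺ = W_Q − η_Q G_Q, W_K⁺ = W_K − η_K G_K, B = W_Q W_Kᵀ, B⁺ = W_Q⁺(W_K⁺)ᵀ, and ΔZ_P = X_P P(B⁺ − B)P X_Pᵀ / √d_k. Assume the locality condition: there exist λ_Q, λ_K ≥ 0 with ‖X W_Q W_Qᵀ P‖_F ≤ λ_Q · ‖X_P‖_F · ‖W_Q‖_op² and ‖X W_K W_Kᵀ P‖_F ≤ λ_K · ‖X_P‖_F · ‖W_K‖_op². Then ‖ΔZ_P‖_F ≤ (‖X_P‖_op² · ‖X_P‖_F² · ‖E‖_op / d_k) · (η_Q · λ_K · ‖W_K‖_op² + η_K · λ_Q · ‖W_Q‖_op²) + η_Q η_K · ‖X_P‖_op² · ‖X_P‖_F² · ‖E‖_op² · ‖X W_K‖_F · ‖X W_Q‖_F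 / d_k^{3/2}. -/

import Mathlib

open Matrix

/-- Frobenius norm of a real matrix. -/
noncomputable def frobNorm {a b : ℕ} (A : Matrix (Fin a) (Fin b) ℝ) : ℝ :=
  Real.sqrt (∑ i, ∑ j, (A i j) ^ 2)

/-- ℓ²→ℓ² operator norm of a real matrix. -/
noncomputable def opNorm {a b : ℕ} (A : Matrix (Fin a) (Fin b) ℝ) : ℝ :=
  ‖(Matrix.toEuclideanLin A).toContinuousLinearMap‖

/-- Gradient of the attention logits `Z = X W_Q W_Kᵀ Xᵀ / √d_k` with respect to `W_Q`:
`G_Q = Xᵀ E X W_K / √d_k`. -/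
noncomputable def gradQ {n d dk : ℕ} (X : Matrix (Fin n) (Fin d) ℝ)
    (E : Matrix (Fin n) (Fin n) ℝ) (WK : Matrix (Fin d) (Fin dk) ℝ) :
    Matrix (Fin d) (Fin dk) ℝ :=
  (Real.sqrt (dk : ℝ))⁻¹ • (Xᵀ * E * X * WK)

/-- Gradient of the attention logits with respect to `W_K`: `G_K = Xᵀ Eᵀ X W_Q / √d_k`. -/
noncomputable def gradK {n d dk : ℕ} (X : Matrix (Fin n) (Fin d) ℝ)
    (E : Matrix (Fin n) (Fin n) ℝ) (WQ : Matrix (Fin d) (Fin dk) ℝ) :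
    Matrix (Fin d) (Fin dk) ℝ :=
  (Real.sqrt (dk : ℝ))⁻¹ • (Xᵀ * Eᵀ * X * WQ)

/-- One-step change of the immature logit component
`ΔZ_P = X_P P (B⁺ − B) P X_Pᵀ / √d_k`, where `X_P = X P`, `B = W_Q W_Kᵀ`,
`B⁺ = (W_Q − η_Q G_Q)(W_K − η_K G_K)ᵀ`. -/
noncomputable def deltaZP {n d dk : ℕ} (X : Matrix (Fin n) (Fin d) ℝ)
    (E : Matrix (Fin n) (Fin n) ℝ) (WQ WK : Matrix (Fin d) (Fin dk) ℝ)
    (P : Matrix (Fin d) (Fin d) ℝ) (ηQ ηK : ℝ) :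
    Matrix (Fin n) (Fin n) ℝ :=
  (Real.sqrt (dk : ℝ))⁻¹ •
    ((X * P) *
      (P * ((WQ - ηQ • gradQ X E WK) * (WK - ηK • gradK X E WQ)ᵀ - WQ * WKᵀ) * P) *
      (X * P)ᵀ)

section AuxLemmas

open scoped Matrix.Norms.L2Operator in
lemma opNorm_eq_l2 {a b : ℕ} (A : Matrix (Fin a) (Fin b) ℝ) : opNorm A = ‖A‖ := rfl

lemma myOpNorm_nonneg {a b : ℕ} (A : Matrix (Fin a) (Fin b) ℝ) : 0 ≤ opNorm A :=
  norm_nonneg _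

open scoped Matrix.Norms.L2Operator in
lemma myOpNorm_mul {a b c : ℕ} (A : Matrix (Fin a) (Fin b) ℝ) (B : Matrix (Fin b) (Fin c) ℝ) :
    opNorm (A * B) ≤ opNorm A * opNorm B := by
  simpa [opNorm_eq_l2] using Matrix.l2_opNorm_mul A B

open scoped Matrix.Norms.L2Operator in
lemma myOpNorm_transpose {a b : ℕ} (A : Matrix (Fin a) (Fin b) ℝ) : opNorm Aᵀ = opNorm A := by
  have h : Aᵀ = Aᴴ := by ext i j; simp [Matrix.conjTranspose_apply]
  rw [opNorm_eq_l2, opNorm_eq_l2, h]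
  exact Matrix.l2_opNorm_conjTranspose A

attribute [local instance] Matrix.frobeniusNormedAddCommGroup Matrix.frobeniusNormedSpace

lemma frobNorm_eq_frob {a b : ℕ} (A : Matrix (Fin a) (Fin b) ℝ) : frobNorm A = ‖A‖ := by
  rw [Matrix.frobenius_norm_def, frobNorm]
  rw [Real.sqrt_eq_rpow]
  congr 1
  · congr 1; ext i; congr 1; ext j
    rw [Real.rpow_two, Real.norm_eq_abs, sq_abs]

lemma myFrobNorm_nonneg {a b : ℕ} (A : Matrix (Fin a) (Fin b) ℝ) : 0 ≤ frobNorm A :=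
  Real.sqrt_nonneg _

lemma frobNorm_add {a b : ℕ} (A B : Matrix (Fin a) (Fin b) ℝ) :
    frobNorm (A + B) ≤ frobNorm A + frobNorm B := by
  simp only [frobNorm_eq_frob]; exact norm_add_le _ _

lemma frobNorm_smul {a b : ℕ} (c : ℝ) (A : Matrix (Fin a) (Fin b) ℝ) :
    frobNorm (c • A) = |c| * frobNorm A := by
  simp only [frobNorm_eq_frob]
  rw [norm_smul, Real.norm_eq_abs]

lemma myFrobNorm_transpose {a b : ℕ} (A : Matrix (Fin a) (Fin b) ℝ) :
    frobNorm Aᵀ = frobNorm A := by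
  simp only [frobNorm_eq_frob]; exact Matrix.frobenius_norm_transpose A

/-- column as Euclidean vector -/
noncomputable def colE {a b : ℕ} (M : Matrix (Fin a) (Fin b) ℝ) (j : Fin b) :
    EuclideanSpace ℝ (Fin a) :=
  (WithLp.equiv 2 (Fin a → ℝ)).symm (fun i => M i j)

lemma colE_norm_sq {a b : ℕ} (M : Matrix (Fin a) (Fin b) ℝ) (j : Fin b) :
    ‖colE M j‖ ^ 2 = ∑ i, (M i j) ^ 2 := by
  rw [EuclideanSpace.norm_eq, Real.sq_sqrt (by positivity)]
  simp [colE, Real.norm_eq_abs, sq_abs]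

lemma frobNorm_sq_eq {a b : ℕ} (M : Matrix (Fin a) (Fin b) ℝ) :
    frobNorm M ^ 2 = ∑ j, ‖colE M j‖ ^ 2 := by
  rw [frobNorm, Real.sq_sqrt (by positivity)]
  simp_rw [colE_norm_sq]
  exact Finset.sum_comm

lemma colE_mul {a b c : ℕ} (A : Matrix (Fin a) (Fin b) ℝ) (B : Matrix (Fin b) (Fin c) ℝ)
    (j : Fin c) :
    colE (A * B) j = (Matrix.toEuclideanLin A).toContinuousLinearMap (colE B j) := by
  have h : (fun i => (A * B) i j) = A *ᵥ (fun i => B i j) := by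
    ext i; simp [Matrix.mulVec, Matrix.mul_apply, dotProduct]
  simp only [colE, LinearMap.coe_toContinuousLinearMap', h,
    Matrix.toLin'_apply]
  rfl

lemma frob_mul_le_op_frob {a b c : ℕ} (A : Matrix (Fin a) (Fin b) ℝ)
    (B : Matrix (Fin b) (Fin c) ℝ) :
    frobNorm (A * B) ≤ opNorm A * frobNorm B := by
  have h2 : frobNorm (A * B) ^ 2 ≤ (opNorm A * frobNorm B) ^ 2 := by
    rw [frobNorm_sq_eq, mul_pow]
    calc ∑ j, ‖colE (A * B) j‖ ^ 2
        ≤ ∑ j, (opNorm A * ‖colE B j‖) ^ 2 := by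
          refine Finset.sum_le_sum fun j _ => pow_le_pow_left₀ (norm_nonneg _) ?_ 2
          rw [colE_mul]
          exact ((Matrix.toEuclideanLin A).toContinuousLinearMap).le_opNorm (colE B j)
      _ = opNorm A ^ 2 * frobNorm B ^ 2 := by
          rw [frobNorm_sq_eq, Finset.mul_sum]; simp [mul_pow]
  nlinarith [myFrobNorm_nonneg (A * B), mul_nonneg (myOpNorm_nonneg A) (myFrobNorm_nonneg B)]

lemma frob_mul_le_frob_op {a b c : ℕ} (A : Matrix (Fin a) (Fin b) ℝ)
    (B : Matrix (Fin b) (Fin c) ℝ) :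
    frobNorm (A * B) ≤ frobNorm A * opNorm B := by
  calc frobNorm (A * B) = frobNorm ((A * B)ᵀ) := (myFrobNorm_transpose _).symm
    _ = frobNorm (Bᵀ * Aᵀ) := by rw [Matrix.transpose_mul]
    _ ≤ opNorm Bᵀ * frobNorm Aᵀ := frob_mul_le_op_frob _ _
    _ = frobNorm A * opNorm B := by
        rw [myOpNorm_transpose, myFrobNorm_transpose]; ring

lemma myOp_le_frob {a b : ℕ} (A : Matrix (Fin a) (Fin b) ℝ) : opNorm A ≤ frobNorm A := by
  refine ContinuousLinearMap.opNorm_le_bound _ (myFrobNorm_nonneg A) fun x => ?_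
  have hx : x = (WithLp.equiv 2 (Fin b → ℝ)).symm (fun k => x k) := rfl
  have happ : (Matrix.toEuclideanLin A).toContinuousLinearMap x
      = (WithLp.equiv 2 (Fin a → ℝ)).symm (A *ᵥ (fun k => x k)) := by
    rw [LinearMap.coe_toContinuousLinearMap']
    conv_lhs => rw [hx]
    rfl
  rw [happ]
  have hxn : ‖x‖ = Real.sqrt (∑ k, (x k) ^ 2) := by
    rw [EuclideanSpace.norm_eq]; simp [Real.norm_eq_abs, sq_abs]
  have hlhs : ‖(WithLp.equiv 2 (Fin a → ℝ)).symm (A *ᵥ (fun k => x k))‖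
      = Real.sqrt (∑ i, (∑ k, A i k * x k) ^ 2) := by
    rw [EuclideanSpace.norm_eq]
    simp [Real.norm_eq_abs, sq_abs, Matrix.mulVec, dotProduct]
  rw [hlhs, hxn, frobNorm, ← Real.sqrt_mul (by positivity)]
  apply Real.sqrt_le_sqrt
  calc ∑ i, (∑ k, A i k * x k) ^ 2
      ≤ ∑ i, (∑ k, (A i k) ^ 2) * (∑ k, (x k) ^ 2) :=
        Finset.sum_le_sum fun i _ => Finset.sum_mul_sq_le_sq_mul_sq _ _ _
    _ = (∑ i, ∑ k, (A i k) ^ 2) * (∑ k, (x k) ^ 2) := by rw [Finset.sum_mul]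

lemma deltaZP_eq {n d dk : ℕ} (X : Matrix (Fin n) (Fin d) ℝ)
    (E : Matrix (Fin n) (Fin n) ℝ) (WQ WK : Matrix (Fin d) (Fin dk) ℝ)
    (P : Matrix (Fin d) (Fin d) ℝ) (hP1 : Pᵀ = P) (hP2 : P * P = P) (ηQ ηK : ℝ) :
    deltaZP X E WQ WK P ηQ ηK =
      (-(ηQ * ((Real.sqrt (dk : ℝ))⁻¹) ^ 2)) •
          (((X * P) * (X * P)ᵀ * E) * ((X * WK * WKᵀ * P) * (X * P)ᵀ))
        + (-(ηK * ((Real.sqrt (dk : ℝ))⁻¹) ^ 2)) •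
          ((X * P) * ((X * WQ * WQᵀ * P)ᵀ * (E * ((X * P) * (X * P)ᵀ))))
        + (ηQ * ηK * ((Real.sqrt (dk : ℝ))⁻¹) ^ 3) •
          (((X * P) * (X * P)ᵀ * E) *
            ((X * WK) * ((X * WQ)ᵀ * (E * ((X * P) * (X * P)ᵀ))))) := by
  have hPP : ∀ (k : ℕ) (t : Matrix (Fin d) (Fin k) ℝ), P * (P * t) = P * t := by
    intro k t; rw [← Matrix.mul_assoc, hP2]
  unfold deltaZP gradQ gradK
  simp only [Matrix.transpose_sub, Matrix.transpose_smul, Matrix.transpose_mul,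
    Matrix.transpose_transpose, hP1, Matrix.sub_mul, Matrix.mul_sub, Matrix.smul_mul,
    Matrix.mul_smul, Matrix.mul_assoc, hPP, smul_smul, smul_sub, sub_smul, smul_add]
  module

end AuxLemmas

set_option maxHeartbeats 1000000 in
/-- Localized immature-channel bound. -/
theorem localized_immature_channel_bound
    (n d dk : ℕ) (hdk : 0 < dk)
    (X : Matrix (Fin n) (Fin d) ℝ)
    (WQ WK : Matrix (Fin d) (Fin dk) ℝ)
    (E : Matrix (Fin n) (Fin n) ℝ)
    (P : Matrix (Fin d) (Fin d) ℝ)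
    (hP1 : Pᵀ = P) (hP2 : P * P = P)
    (ηQ ηK : ℝ) (hηQ : 0 ≤ ηQ) (hηK : 0 ≤ ηK)
    (lamQ lamK : ℝ) (hlamQ : 0 ≤ lamQ) (hlamK : 0 ≤ lamK)
    (hlocQ : frobNorm (X * WQ * WQᵀ * P) ≤ lamQ * frobNorm (X * P) * opNorm WQ ^ 2)
    (hlocK : frobNorm (X * WK * WKᵀ * P) ≤ lamK * frobNorm (X * P) * opNorm WK ^ 2) :
    frobNorm (deltaZP X E WQ WK P ηQ ηK)
      ≤ opNorm (X * P) ^ 2 * frobNorm (X * P) ^ 2 * opNorm E / (dk : ℝ) *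
          (ηQ * lamK * opNorm WK ^ 2 + ηK * lamQ * opNorm WQ ^ 2)
        + ηQ * ηK * opNorm (X * P) ^ 2 * frobNorm (X * P) ^ 2 * opNorm E ^ 2 *
            frobNorm (X * WK) * frobNorm (X * WQ) / ((dk : ℝ) ^ ((3 : ℝ) / 2)) := by
  set Y := X * P with hY
  set c : ℝ := (Real.sqrt (dk : ℝ))⁻¹ with hc
  have hdk' : (0 : ℝ) < (dk : ℝ) := by exact_mod_cast hdk
  have hs : (0 : ℝ) < Real.sqrt (dk : ℝ) := Real.sqrt_pos.mpr hdk'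
  have hc0 : 0 ≤ c := by positivity
  have hc2 : c ^ 2 = ((dk : ℝ))⁻¹ := by
    rw [hc, inv_pow, Real.sq_sqrt hdk'.le]
  have hc3 : c ^ 3 = ((dk : ℝ) ^ ((3 : ℝ) / 2))⁻¹ := by
    rw [hc, inv_pow]
    congr 1
    rw [Real.sqrt_eq_rpow, ← Real.rpow_natCast ((dk : ℝ) ^ ((1:ℝ)/2)) 3,
      ← Real.rpow_mul hdk'.le]
    norm_num
  -- abbreviations
  set a := opNorm Y with ha
  set f := frobNorm Y with hf
  set e := opNorm E with he
  set wq := opNorm WQ with hwq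
  set wk := opNorm WK with hwk
  set fK := frobNorm (X * WK) with hfK
  set fQ := frobNorm (X * WQ) with hfQ
  have ha0 : 0 ≤ a := myOpNorm_nonneg _
  have hf0 : 0 ≤ f := myFrobNorm_nonneg _
  have he0 : 0 ≤ e := myOpNorm_nonneg _
  have hwq0 : 0 ≤ wq := myOpNorm_nonneg _
  have hwk0 : 0 ≤ wk := myOpNorm_nonneg _
  have hfK0 : 0 ≤ fK := myFrobNorm_nonneg _
  have hfQ0 : 0 ≤ fQ := myFrobNorm_nonneg _
  have haf : a ≤ f := myOp_le_frob _
  -- the three pieces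
  set t1 := (Y * Yᵀ * E) * ((X * WK * WKᵀ * P) * Yᵀ) with ht1
  set t2 := Y * ((X * WQ * WQᵀ * P)ᵀ * (E * (Y * Yᵀ))) with ht2
  set t3 := (Y * Yᵀ * E) * ((X * WK) * ((X * WQ)ᵀ * (E * (Y * Yᵀ)))) with ht3
  have hid := deltaZP_eq X E WQ WK P hP1 hP2 ηQ ηK
  -- operator norm of Y Yᵀ E
  have hopYYE : opNorm (Y * Yᵀ * E) ≤ a * a * e := by
    calc opNorm (Y * Yᵀ * E) ≤ opNorm (Y * Yᵀ) * e := myOpNorm_mul _ _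
      _ ≤ (opNorm Y * opNorm Yᵀ) * e :=
          mul_le_mul_of_nonneg_right (myOpNorm_mul _ _) he0
      _ = a * a * e := by rw [myOpNorm_transpose]
  have hopEYY : opNorm (E * (Y * Yᵀ)) ≤ e * (a * a) := by
    calc opNorm (E * (Y * Yᵀ)) ≤ e * opNorm (Y * Yᵀ) := myOpNorm_mul _ _
      _ ≤ e * (opNorm Y * opNorm Yᵀ) :=
          mul_le_mul_of_nonneg_left (myOpNorm_mul _ _) he0
      _ = e * (a * a) := by rw [myOpNorm_transpose]
  have hYYE0 : 0 ≤ opNorm (Y * Yᵀ * E) := myOpNorm_nonneg _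
  have hEYY0 : 0 ≤ opNorm (E * (Y * Yᵀ)) := myOpNorm_nonneg _
  -- bound t1
  have hb1 : frobNorm t1 ≤ a ^ 2 * f ^ 2 * e * (lamK * wk ^ 2) := by
    have s1 : frobNorm ((X * WK * WKᵀ * P) * Yᵀ) ≤ (lamK * f * wk ^ 2) * a := by
      calc frobNorm ((X * WK * WKᵀ * P) * Yᵀ)
          ≤ frobNorm (X * WK * WKᵀ * P) * opNorm Yᵀ := frob_mul_le_frob_op _ _
        _ ≤ (lamK * f * wk ^ 2) * a := by
            rw [myOpNorm_transpose]
            exact mul_le_mul_of_nonneg_right hlocK ha0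
    calc frobNorm t1 ≤ opNorm (Y * Yᵀ * E) * frobNorm ((X * WK * WKᵀ * P) * Yᵀ) :=
          frob_mul_le_op_frob _ _
      _ ≤ (a * a * e) * ((lamK * f * wk ^ 2) * a) := by
          apply mul_le_mul hopYYE s1 (myFrobNorm_nonneg _) (by positivity)
      _ ≤ a ^ 2 * f ^ 2 * e * (lamK * wk ^ 2) := by
          nlinarith [mul_le_mul_of_nonneg_left haf
            (show (0:ℝ) ≤ a * a * e * (lamK * wk ^ 2) * f by positivity)]
  -- bound t2
  have hb2 : frobNorm t2 ≤ a ^ 2 * f ^ 2 * e * (lamQ * wq ^ 2) := by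
    have s2 : frobNorm ((X * WQ * WQᵀ * P)ᵀ * (E * (Y * Yᵀ)))
        ≤ (lamQ * f * wq ^ 2) * (e * (a * a)) := by
      calc frobNorm ((X * WQ * WQᵀ * P)ᵀ * (E * (Y * Yᵀ)))
          ≤ frobNorm ((X * WQ * WQᵀ * P)ᵀ) * opNorm (E * (Y * Yᵀ)) := frob_mul_le_frob_op _ _
        _ = frobNorm (X * WQ * WQᵀ * P) * opNorm (E * (Y * Yᵀ)) := by
            rw [myFrobNorm_transpose]
        _ ≤ (lamQ * f * wq ^ 2) * (e * (a * a)) :=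
            mul_le_mul hlocQ hopEYY hEYY0 (by positivity)
    calc frobNorm t2 ≤ opNorm Y * frobNorm ((X * WQ * WQᵀ * P)ᵀ * (E * (Y * Yᵀ))) :=
          frob_mul_le_op_frob _ _
      _ ≤ a * ((lamQ * f * wq ^ 2) * (e * (a * a))) :=
          mul_le_mul_of_nonneg_left s2 ha0
      _ ≤ a ^ 2 * f ^ 2 * e * (lamQ * wq ^ 2) := by
          nlinarith [mul_le_mul_of_nonneg_left haf
            (show (0:ℝ) ≤ a * a * e * (lamQ * wq ^ 2) * f by positivity)]
  -- bound t3
  have hb3 : frobNorm t3 ≤ a ^ 2 * f ^ 2 * e ^ 2 * fK * fQ := by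
    have s3 : opNorm ((X * WQ)ᵀ * (E * (Y * Yᵀ))) ≤ fQ * (e * (a * a)) := by
      calc opNorm ((X * WQ)ᵀ * (E * (Y * Yᵀ)))
          ≤ opNorm ((X * WQ)ᵀ) * opNorm (E * (Y * Yᵀ)) := myOpNorm_mul _ _
        _ ≤ fQ * (e * (a * a)) := by
            rw [myOpNorm_transpose]
            exact mul_le_mul ((myOp_le_frob _)) hopEYY hEYY0 hfQ0
    have s4 : frobNorm ((X * WK) * ((X * WQ)ᵀ * (E * (Y * Yᵀ))))
        ≤ fK * (fQ * (e * (a * a))) := by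
      calc frobNorm ((X * WK) * ((X * WQ)ᵀ * (E * (Y * Yᵀ))))
          ≤ frobNorm (X * WK) * opNorm ((X * WQ)ᵀ * (E * (Y * Yᵀ))) := frob_mul_le_frob_op _ _
        _ ≤ fK * (fQ * (e * (a * a))) :=
            mul_le_mul_of_nonneg_left s3 hfK0
    calc frobNorm t3 ≤ opNorm (Y * Yᵀ * E) * frobNorm ((X * WK) * ((X * WQ)ᵀ * (E * (Y * Yᵀ)))) :=
          frob_mul_le_op_frob _ _
      _ ≤ (a * a * e) * (fK * (fQ * (e * (a * a)))) :=
          mul_le_mul hopYYE s4 (myFrobNorm_nonneg _) (by positivity)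
      _ ≤ a ^ 2 * f ^ 2 * e ^ 2 * fK * fQ := by
          nlinarith [mul_le_mul_of_nonneg_left (mul_le_mul haf haf ha0 hf0)
            (show (0:ℝ) ≤ a * a * e * e * fK * fQ by positivity), sq_nonneg a,
            mul_nonneg (mul_nonneg he0 he0) (mul_nonneg hfK0 hfQ0)]
  -- triangle inequality
  have htri : frobNorm (deltaZP X E WQ WK P ηQ ηK)
      ≤ (ηQ * c ^ 2) * frobNorm t1 + (ηK * c ^ 2) * frobNorm t2
        + (ηQ * ηK * c ^ 3) * frobNorm t3 := by
    rw [hid]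
    calc frobNorm ((-(ηQ * c ^ 2)) • t1 + (-(ηK * c ^ 2)) • t2 + (ηQ * ηK * c ^ 3) • t3)
        ≤ frobNorm ((-(ηQ * c ^ 2)) • t1 + (-(ηK * c ^ 2)) • t2)
            + frobNorm ((ηQ * ηK * c ^ 3) • t3) := frobNorm_add _ _
      _ ≤ frobNorm ((-(ηQ * c ^ 2)) • t1) + frobNorm ((-(ηK * c ^ 2)) • t2)
            + frobNorm ((ηQ * ηK * c ^ 3) • t3) := by
          gcongr; exact frobNorm_add _ _
      _ = (ηQ * c ^ 2) * frobNorm t1 + (ηK * c ^ 2) * frobNorm t2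
            + (ηQ * ηK * c ^ 3) * frobNorm t3 := by
          rw [frobNorm_smul, frobNorm_smul, frobNorm_smul, abs_neg, abs_neg,
            abs_of_nonneg (by positivity), abs_of_nonneg (by positivity),
            abs_of_nonneg (by positivity)]
  refine htri.trans ?_
  have hsum : (ηQ * c ^ 2) * frobNorm t1 + (ηK * c ^ 2) * frobNorm t2
      + (ηQ * ηK * c ^ 3) * frobNorm t3
      ≤ (ηQ * c ^ 2) * (a ^ 2 * f ^ 2 * e * (lamK * wk ^ 2))
        + (ηK * c ^ 2) * (a ^ 2 * f ^ 2 * e * (lamQ * wq ^ 2))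
        + (ηQ * ηK * c ^ 3) * (a ^ 2 * f ^ 2 * e ^ 2 * fK * fQ) := by
    gcongr
  refine hsum.trans (le_of_eq ?_)
  rw [div_eq_mul_inv, div_eq_mul_inv, ← hc2, ← hc3]
  ring
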